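/- In the election constructed from a graph G = (V,E) with V = {v_1,...,v_ν} and parameter κ — with voters N = [ν] ∪ N_0 where |N_0| = (κ−1)ν, candidates {p_1,p_2,p_3}, ℓ = ν rounds, s_{i,i} = {p_2}, s_{i,t} = {p_1,p_2} if {v_i,v_t} ∈ E, s_{i,t} = {p_1} otherwise (for i ∈ [ν]), and s_{i,t} = {p_3} for i ∈ N_0 — a set N' ⊆ [ν] satisfies β(N') = ℓ if and only if {v_i : i ∈ N'} is a clique in G. -/
import Mathlib


open Finset

/-- Satisfaction of voter `i` under outcome `o`: number of rounds `t` with `o t ∈ s i t`. -/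
def sat {V : Type*} {ℓ : ℕ} {P : Type*} [DecidableEq P]
    (s : V → Fin ℓ → Finset P) (o : Fin ℓ → P) (i : V) : ℕ :=
  (univ.filter fun t => o t ∈ s i t).card

/-- Agreement of a group `N'`: number of rounds in which all members approve a common candidate. -/
def agreement {V : Type*} {ℓ : ℕ} {P : Type*} [Fintype P] [DecidableEq P]
    (s : V → Fin ℓ → Finset P) (N' : Finset V) : ℕ :=
  (univ.filter fun t : Fin ℓ => ∃ p : P, ∀ i ∈ N', p ∈ s i t).card

/-- Demand `α(N') = ⌊β(N')·|N'|/n⌋`. -/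
def demand {V : Type*} [Fintype V] {ℓ : ℕ} {P : Type*} [Fintype P] [DecidableEq P]
    (s : V → Fin ℓ → Finset P) (N' : Finset V) : ℕ :=
  agreement s N' * N'.card / Fintype.card V

/-- Outcome `o` provides extended justified representation. -/
def EJR {V : Type*} [Fintype V] [DecidableEq V] {ℓ : ℕ} {P : Type*} [Fintype P] [DecidableEq P]
    (s : V → Fin ℓ → Finset P) (o : Fin ℓ → P) : Prop :=
  ∀ N' : Finset V, N'.Nonempty → ∃ i ∈ N', demand s N' ≤ sat s o i

/-- Outcome `o` provides proportional justified representation. -/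
def PJR {V : Type*} [Fintype V] [DecidableEq V] {ℓ : ℕ} {P : Type*} [Fintype P] [DecidableEq P]
    (s : V → Fin ℓ → Finset P) (o : Fin ℓ → P) : Prop :=
  ∀ N' : Finset V,
    demand s N' ≤ (univ.filter fun t : Fin ℓ => ∃ i ∈ N', o t ∈ s i t).card

/-- Outcome `o` provides justified representation. -/
def JR {V : Type*} [Fintype V] [DecidableEq V] {ℓ : ℕ} {P : Type*} [Fintype P] [DecidableEq P]
    (s : V → Fin ℓ → Finset P) (o : Fin ℓ → P) : Prop :=
  ∀ N' : Finset V, 0 < demand s N' → ∃ i ∈ N', 0 < sat s o i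

/-- The election of the clique reduction: voters are `[ν] ⊕ N_0` with `|N_0| = (κ-1)·ν`,
candidates `p_1, p_2, p_3` encoded as `0, 1, 2 : Fin 3`, and `ℓ = ν` rounds. -/
def cliqueElection {ν : ℕ} (κ : ℕ) (G : SimpleGraph (Fin ν)) [DecidableRel G.Adj] :
    (Fin ν ⊕ Fin ((κ - 1) * ν)) → Fin ν → Finset (Fin 3)
  | Sum.inl i => fun t => if t = i then {1} else if G.Adj i t then {0, 1} else {0}
  | Sum.inr _ => fun _ => {2}

theorem agreement_eq_iff {V : Type*} {ℓ : ℕ} {P : Type*} [Fintype P] [DecidableEq P]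
    (s : V → Fin ℓ → Finset P) (N' : Finset V) :
    agreement s N' = ℓ ↔ ∀ t : Fin ℓ, ∃ p : P, ∀ i ∈ N', p ∈ s i t := by
  unfold agreement
  constructor
  · intro h t
    exact Finset.card_filter_eq_iff.mp
      (by rw [Finset.card_univ, Fintype.card_fin]; exact h) t (Finset.mem_univ t)
  · intro h
    rw [Finset.filter_true_of_mem fun t _ => h t, Finset.card_univ, Fintype.card_fin]

/-- a set `N' ⊆ [ν]` of voters satisfies `β(N') = ℓ` if and only if the
corresponding vertex set is a clique in `G`. -/
theorem agreement_eq_ell_iff_clique {ν : ℕ} (κ : ℕ) (G : SimpleGraph (Fin ν))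
    [DecidableRel G.Adj] (N' : Finset (Fin ν)) :
    agreement (cliqueElection κ G) (N'.image Sum.inl) = ν ↔
      G.IsClique (N' : Set (Fin ν)) := by
  have key : (∀ t : Fin ν, ∃ p : Fin 3, ∀ i ∈ N'.image Sum.inl,
      p ∈ cliqueElection κ G i t) ↔ G.IsClique (N' : Set (Fin ν)) := by
    constructor
    · intro h i hi j hj hij
      simp only [Finset.mem_coe] at hi hj
      obtain ⟨p, hp⟩ := h i
      have h1 : p = 1 := by
        simpa [cliqueElection] using hp _ (Finset.mem_image_of_mem Sum.inl hi)
      subst h1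
      have h2 := hp _ (Finset.mem_image_of_mem Sum.inl hj)
      simp only [cliqueElection] at h2
      rw [if_neg hij] at h2
      by_cases hadj : G.Adj j i
      · exact hadj.symm
      · rw [if_neg hadj] at h2
        simp at h2
    · intro hc t
      by_cases ht : t ∈ N'
      · refine ⟨1, ?_⟩
        intro i hi
        obtain ⟨i, hi', rfl⟩ := Finset.mem_image.mp hi
        by_cases hti : t = i
        · simp [cliqueElection, hti]
        · have hadj : G.Adj i t := (hc hi' ht (fun hh => hti hh.symm)).symm.symm
          simp [cliqueElection, hti, hadj]
      · refine ⟨0, ?_⟩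
        intro i hi
        obtain ⟨i, hi', rfl⟩ := Finset.mem_image.mp hi
        have hti : t ≠ i := fun hh => ht (hh ▸ hi')
        by_cases hadj : G.Adj i t <;> simp [cliqueElection, hti, hadj]
  rw [agreement_eq_iff]
  exact key
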